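/- arXiv:1401.3263 — 2 statements merged into one kernel-verified Lean document; each statement's English description precedes it below -/
import Mathlib

section
/- Let (Σ,*) be a 1-block quasi-group Markov shift over a nonempty finite alphabet A. Then the topological entropy of the shift map σ on the compact space Σ is zero if and only if Σ is a finite set (equivalently, in the decomposition of Σ as a product of a finite quasigroup shift with a full shift, the full-shift factor is trivial). -/
open Dynamics Set Filter UniformSpace Uniformity Topology ENNReal EReal

namespace Statement17Aux

variable {A : Type*}

/-- A chain built by iterating the (step-dependent) maps `q k` starting from `a0`. -/
def chain (q : ℕ → A → A) (a0 : A) : ℕ → A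
  | 0 => a0
  | k + 1 => q k (chain q a0 k)

@[simp] lemma chain_zero (q : ℕ → A → A) (a0 : A) : chain q a0 0 = a0 := rfl

@[simp] lemma chain_succ (q : ℕ → A → A) (a0 : A) (k : ℕ) :
    chain q a0 (k + 1) = q k (chain q a0 k) := rfl

/-- On a finite discrete space, the identity relation is an entourage. -/
lemma idRel_mem_uniformity [Finite A] [UniformSpace A] [DiscreteTopology A] :
    SetRel.id ∈ 𝓤 A := by
  have h : ∀ a : A, ∃ U ∈ 𝓤 A, Prod.mk a ⁻¹' U ⊆ {a} := by
    intro a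
    have h1 : ({a} : Set A) ∈ 𝓝 a := by
      simp
    rw [nhds_eq_comap_uniformity, mem_comap] at h1
    exact h1
  choose U hU hUa using h
  have hV : (⋂ a, U a) ∈ 𝓤 A := (Filter.iInter_mem).2 hU
  refine mem_of_superset hV ?_
  rintro ⟨a, b⟩ hab
  have hb : b ∈ Prod.mk a ⁻¹' U a := mem_iInter.1 hab a
  have : b ∈ ({a} : Set A) := hUa a hb
  simp only [mem_singleton_iff] at this
  simp [this]

lemma shift_iterate (k : ℕ) (x : ℤ → A) (i : ℤ) :
    ((fun x : ℤ → A => (fun i => x (i + 1) : ℤ → A))^[k] x) i = x (i + k) := by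
  induction k generalizing x i with
  | zero => simp
  | succ k ih =>
    rw [Function.iterate_succ_apply, ih]
    show x (i + k + 1) = x (i + (k + 1 : ℕ))
    congr 1
    push_cast
    ring

/-- Extension of finite valid paths to bi-infinite paths. -/
lemma exists_point (T : A → A → Prop) (m : ℤ) (a0 : A) (s : A → A) (hs : ∀ a, T a (s a))
    (q : ℕ → A → A) (hq : ∀ k a, T (q k a) a) :
    ∃ x : ℤ → A, (∀ i : ℤ, T (x i) (x (i + 1))) ∧ ∀ k : ℕ, x (m - k) = chain q a0 k := by
  set dn : ℕ → A := chain q a0 with hdn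
  set up : ℕ → A := chain (fun _ => s) a0 with hup
  have hup_succ : ∀ k, up (k + 1) = s (up k) := fun k => rfl
  have hdn_succ : ∀ k, dn (k + 1) = q k (dn k) := fun k => rfl
  have h00 : up 0 = dn 0 := rfl
  refine ⟨fun i => if m ≤ i then up (i - m).toNat else dn (m - i).toNat, ?_, ?_⟩
  · intro i
    dsimp only
    by_cases h : m ≤ i
    · have h1 : m ≤ i + 1 := by omega
      rw [if_pos h, if_pos h1]
      have e : (i + 1 - m).toNat = (i - m).toNat + 1 := by omega
      rw [e, hup_succ]
      exact hs _
    · have hk : (m - i).toNat = (m - i - 1).toNat + 1 := by omega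
      have hx2 : (if m ≤ i + 1 then up (i + 1 - m).toNat else dn (m - (i + 1)).toNat)
          = dn (m - i - 1).toNat := by
        by_cases h3 : m ≤ i + 1
        · rw [if_pos h3]
          have e1 : (i + 1 - m).toNat = 0 := by omega
          have e2 : (m - i - 1).toNat = 0 := by omega
          rw [e1, e2]
          exact h00
        · rw [if_neg h3]
          congr 1
          omega
      rw [if_neg h, hx2, hk, hdn_succ]
      exact hq _ _
  · intro k
    dsimp only
    rcases Nat.eq_zero_or_pos k with rfl | hk
    · have e : ((0 : ℕ) : ℤ) = 0 := rfl
      rw [e, sub_zero, if_pos le_rfl]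
      have e2 : (m - m).toNat = 0 := by omega
      rw [e2]
      exact h00
    · have h : ¬ m ≤ m - (k : ℤ) := by omega
      rw [if_neg h]
      congr 1
      omega

/-- If every letter has a unique predecessor, the shift space is finite. -/
lemma finite_of_unique_pred [Finite A] (T : A → A → Prop) (hsucc : ∀ a : A, ∃ b, T a b)
    (h1 : ∀ a : A, {c | T c a}.ncard = 1) :
    {x : ℤ → A | ∀ i : ℤ, T (x i) (x (i + 1))}.Finite := by
  have hg : ∀ a : A, ∃ g, {c | T c a} = {g} := fun a => Set.ncard_eq_one.1 (h1 a)
  choose g hgspec using hg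
  have hgiff : ∀ a c : A, T c a ↔ c = g a := by
    intro a c
    constructor
    · intro h
      have : c ∈ {c | T c a} := h
      rw [hgspec a] at this
      exact this
    · rintro rfl
      have : g a ∈ ({g a} : Set A) := rfl
      rw [← hgspec a] at this
      exact this
  have hsurj : Function.Surjective g := fun c => by
    obtain ⟨b, hb⟩ := hsucc c
    exact ⟨b, ((hgiff b c).1 hb).symm⟩
  have hinj : Function.Injective g := Finite.injective_iff_surjective.2 hsurj
  apply Set.Finite.of_finite_image (f := fun x : ℤ → A => x 0)
  · exact Set.toFinite _
  · intro x hx y hy hxy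
    have key : ∀ i : ℤ, x i = y i := by
      intro i
      induction i using Int.induction_on with
      | zero => exact hxy
      | succ i ih =>
        have hxg : x (i : ℤ) = g (x ((i : ℤ) + 1)) := (hgiff _ _).1 (hx (i : ℤ))
        have hyg : y (i : ℤ) = g (y ((i : ℤ) + 1)) := (hgiff _ _).1 (hy (i : ℤ))
        apply hinj
        rw [← hxg, ← hyg, ih]
      | pred i ih =>
        have e : (-(i : ℤ) - 1) + 1 = -(i : ℤ) := by ring
        have hxg : x (-(i : ℤ) - 1) = g (x (-(i : ℤ))) := by
          have := (hgiff _ _).1 (hx (-(i : ℤ) - 1))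
          rwa [e] at this
        have hyg : y (-(i : ℤ) - 1) = g (y (-(i : ℤ))) := by
          have := (hgiff _ _).1 (hy (-(i : ℤ) - 1))
          rwa [e] at this
        rw [hxg, hyg, ih]
    exact funext key

/-- Constant in-degree for compatible transition relations over a quasigroup. -/
lemma pred_ncard_const [Finite A] (op : A → A → A)
    (hleft : ∀ a b c : A, op a b = op a c → b = c)
    (hright : ∀ a b c : A, op b a = op c a → b = c)
    (T : A → A → Prop)
    (hpred : ∀ a : A, ∃ c, T c a)
    (hcompat : ∀ a a' b b' : A, T a b → T a' b' → T (op a a') (op b b'))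
    (a b : A) :
    {c | T c a}.ncard = {c | T c b}.ncard := by
  suffices h : ∀ a b : A, {c | T c a}.ncard ≤ {c | T c b}.ncard from
    le_antisymm (h a b) (h b a)
  intro a b
  have hsurj : Function.Surjective (op a) :=
    Finite.injective_iff_surjective.1 (fun x y h => hleft a x y h)
  obtain ⟨v, hv⟩ := hsurj b
  obtain ⟨w, hw⟩ := hpred v
  apply Set.ncard_le_ncard_of_injOn (fun c => op c w)
  · intro c hc
    have := hcompat c w a v hc hw
    rwa [hv] at this
  · intro c _ c' _ h
    exact hright w c c' h

/-- Topological entropy of a finite nonempty set is zero. -/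
lemma entropy_zero_of_finite {X : Type*} [UniformSpace X] (T : X → X) {F : Set X}
    (hne : F.Nonempty) (hfin : F.Finite) : coverEntropy T F = 0 := by
  refine le_antisymm ?_ (coverEntropy_nonneg T hne)
  refine iSup₂_le fun U hU => ?_
  have hcover : ∀ n : ℕ, IsDynCoverOf T F U n (hfin.toFinset : Set X) := by
    intro n x hx
    refine ⟨x, hfin.mem_toFinset.2 hx, ?_⟩
    have hid : SetRel.id ⊆ U := by
      rintro ⟨p, q⟩ hpq
      rw [SetRel.mem_id] at hpq
      subst hpq
      exact refl_mem_uniformity hU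
    exact mem_dynEntourage.2 fun k _ => hid rfl
  have hbound : ∀ n : ℕ, coverMincard T F U n ≤ (hfin.toFinset.card : ℕ∞) :=
    fun n => IsDynCoverOf.coverMincard_le_card (hcover n)
  have hKne : hfin.toFinset.card ≠ 0 := by
    obtain ⟨x, hx⟩ := hne
    exact Finset.card_ne_zero_of_mem (hfin.mem_toFinset.2 hx)
  have hbot : ENNReal.log ((hfin.toFinset.card : ℕ∞) : ℝ≥0∞) ≠ ⊥ := by
    simp [hKne]
  have htop : ENNReal.log ((hfin.toFinset.card : ℕ∞) : ℝ≥0∞) ≠ ⊤ := by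
    simp
  calc coverEntropyEntourage T F U
      ≤ atTop.limsup (fun n : ℕ => ENNReal.log ((hfin.toFinset.card : ℕ∞) : ℝ≥0∞) / (n : EReal)) := by
        exact limsup_le_limsup (Eventually.of_forall fun n =>
          monotone_div_right_of_nonneg (Nat.cast_nonneg' n)
            (log_monotone (ENat.toENNReal_le.2 (hbound n))))
    _ = 0 := Tendsto.limsup_eq (EReal.tendsto_const_div_atTop_nhds_zero_nat hbot htop)

end Statement17Aux

open Statement17Aux

theorem statement17 {A : Type*} [Fintype A] [Nonempty A]
    [UniformSpace A] [DiscreteTopology A]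
    (op : A → A → A)
    (hleft : ∀ a b c : A, op a b = op a c → b = c)
    (hright : ∀ a b c : A, op b a = op c a → b = c)
    (T : A → A → Prop)
    (hsucc : ∀ a : A, ∃ b, T a b)
    (hpred : ∀ a : A, ∃ c, T c a)
    (hcompat : ∀ a a' b b' : A, T a b → T a' b' → T (op a a') (op b b')) :
    Dynamics.coverEntropy (fun x : ℤ → A => (fun i => x (i + 1) : ℤ → A))
        {x : ℤ → A | ∀ i : ℤ, T (x i) (x (i + 1))} = 0 ↔
      {x : ℤ → A | ∀ i : ℤ, T (x i) (x (i + 1))}.Finite := by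
  classical
  set σ : (ℤ → A) → (ℤ → A) := fun x : ℤ → A => (fun i => x (i + 1) : ℤ → A) with hσ
  set S : Set (ℤ → A) := {x : ℤ → A | ∀ i : ℤ, T (x i) (x (i + 1))} with hSdef
  -- S is nonempty
  have hne : S.Nonempty := by
    obtain ⟨x, hx, -⟩ := exists_point T 0 (Classical.arbitrary A)
      (fun a => (hsucc a).choose) (fun a => (hsucc a).choose_spec)
      (fun _ a => (hpred a).choose) (fun _ a => (hpred a).choose_spec)
    exact ⟨x, hx⟩
  constructor
  · intro h0
    by_contra hnfin
    -- then not all letters have a unique predecessor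
    have h1 : ¬ ∀ a : A, {c | T c a}.ncard = 1 := by
      intro h1
      exact hnfin (finite_of_unique_pred T hsucc h1)
    push_neg at h1
    obtain ⟨a₀, ha₀⟩ := h1
    have hpos : ∀ a : A, 0 < {c | T c a}.ncard := by
      intro a
      rw [Set.ncard_pos (Set.toFinite _)]
      exact hpred a
    have h2 : ∀ a : A, 1 < {c | T c a}.ncard := by
      intro a
      rw [pred_ncard_const op hleft hright T hpred hcompat a a₀]
      have := hpos a₀
      omega
    -- two distinct predecessor selections
    have hpp : ∀ a : A, ∃ c c' : A, T c a ∧ T c' a ∧ c ≠ c' := by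
      intro a
      obtain ⟨c, hc, c', hc', hcc⟩ := (Set.one_lt_ncard (Set.toFinite _)).1 (h2 a)
      exact ⟨c, c', hc, hc', hcc⟩
    choose p0 p1 hp0 hp1 hpne using hpp
    -- the "agree at coordinate 0" entourage
    set W0 : Set ((ℤ → A) × (ℤ → A)) := {p | p.1 0 = p.2 0} with hW0def
    have hW0 : W0 ∈ 𝓤 (ℤ → A) := by
      have hid : SetRel.id ∈ 𝓤 A := idRel_mem_uniformity
      have hproj := Pi.uniformContinuous_proj (fun _ : ℤ => A) 0
      have hmem : (fun p : (ℤ → A) × (ℤ → A) => (p.1 0, p.2 0)) ⁻¹' SetRel.id ∈ 𝓤 (ℤ → A) :=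
        hproj hid
      refine mem_of_superset hmem ?_
      rintro ⟨x, y⟩ hxy
      simpa [hW0def] using hxy
    -- bit-selected predecessor maps
    set P : Bool → A → A := fun b => if b then p0 else p1 with hPdef
    have hP : ∀ (b : Bool) (a : A), T (P b a) a := by
      intro b a
      cases b <;> simp [hPdef, hp0 a, hp1 a]
    have hPne : ∀ (b b' : Bool) (a : A), b ≠ b' → P b a ≠ P b' a := by
      intro b b' a hbb
      cases b <;> cases b' <;> simp [hPdef] at hbb ⊢
      · exact (hpne a).symm
      · exact hpne a
    set a0 : A := Classical.arbitrary A with ha0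
    set s : A → A := fun a => (hsucc a).choose with hsdef
    have hs : ∀ a, T a (s a) := fun a => (hsucc a).choose_spec
    have chain_eq : ∀ (δ δ' : ℕ → Bool) (k : ℕ), (∀ j < k, δ j = δ' j) →
        chain (fun k => P (δ k)) a0 k = chain (fun k => P (δ' k)) a0 k := by
      intro δ δ' k
      induction k with
      | zero => intro _; rfl
      | succ k ih =>
        intro h
        rw [chain_succ, chain_succ, ih (fun j hj => h j (hj.trans (Nat.lt_succ_self k))),
          h k (Nat.lt_succ_self k)]
    have key : ∀ n : ℕ, ((2 : ℕ∞)) ^ n ≤ netMaxcard σ S W0 n := by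
      intro n
      set E : (Fin n → Bool) → ℕ → Bool :=
        fun δ k => if h : k < n then δ ⟨k, h⟩ else true with hEdef
      have hex : ∀ δ : Fin n → Bool, ∃ x : ℤ → A, (∀ i : ℤ, T (x i) (x (i + 1))) ∧
          ∀ k : ℕ, x ((n : ℤ) - k) = chain (fun k => P (E δ k)) a0 k :=
        fun δ => exists_point T n a0 s hs (fun k => P (E δ k)) (fun k a => hP _ _)
      choose X hX1 hX2 using hex
      have hsep : ∀ δ δ' : Fin n → Bool, δ ≠ δ' →
          ∃ j : ℕ, j < n ∧ X δ ((0 : ℤ) + (j : ℤ)) ≠ X δ' ((0 : ℤ) + (j : ℤ)) := by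
        intro δ δ' hdd
        have hdiff : ∃ k, E δ k ≠ E δ' k := by
          by_contra h
          push_neg at h
          apply hdd
          funext ⟨k, hk⟩
          have hk2 := h k
          simp only [hEdef, dif_pos hk] at hk2
          exact hk2
        set k : ℕ := Nat.find hdiff with hkdef
        have hk : E δ k ≠ E δ' k := Nat.find_spec hdiff
        have hkn : k < n := by
          by_contra hknn
          apply hk
          rw [hEdef]
          simp only [dif_neg (by omega : ¬ k < n)]
        have hagree : ∀ j < k, E δ j = E δ' j := fun j hj => by
          have := Nat.find_min hdiff hj
          exact not_not.1 this
        have hchain : chain (fun k => P (E δ k)) a0 (k + 1)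
            ≠ chain (fun k => P (E δ' k)) a0 (k + 1) := by
          rw [chain_succ, chain_succ, chain_eq (E δ) (E δ') k hagree]
          exact hPne _ _ _ hk
        refine ⟨n - (k + 1), by omega, ?_⟩
        have e1 : (0 : ℤ) + ((n - (k + 1) : ℕ) : ℤ) = (n : ℤ) - ((k + 1 : ℕ) : ℤ) := by
          push_cast
          omega
        rw [e1, hX2 δ (k + 1), hX2 δ' (k + 1)]
        exact hchain
      have hXinj : Function.Injective X := by
        intro δ δ' h
        by_contra hdd
        obtain ⟨j, hj, hx⟩ := hsep δ δ' hdd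
        exact hx (congrFun h _)
      set sF : Finset (ℤ → A) := Finset.univ.image X with hsFdef
      have hcard : sF.card = 2 ^ n := by
        rw [hsFdef, Finset.card_image_of_injective _ hXinj, Finset.card_univ]
        simp
      have hnet : IsDynNetIn σ S W0 n (sF : Set (ℤ → A)) := by
        constructor
        · intro x hx
          simp only [hsFdef, Finset.coe_image, Finset.coe_univ, Set.image_univ,
            Set.mem_range] at hx
          obtain ⟨δ, rfl⟩ := hx
          exact hX1 δ
        · intro x hx y hy hxy
          simp only [hsFdef, Finset.coe_image, Finset.coe_univ, Set.image_univ,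
            Set.mem_range] at hx hy
          obtain ⟨δ, rfl⟩ := hx
          obtain ⟨δ', rfl⟩ := hy
          have hdd : δ ≠ δ' := fun h => hxy (congrArg X h)
          obtain ⟨j, hj, hne'⟩ := hsep δ δ' hdd
          simp only [Function.onFun]
          rw [Set.disjoint_left]
          intro z hz1 hz2
          have h1 : (X δ, z) ∈ dynEntourage σ W0 n := hz1
          have h2 : (X δ', z) ∈ dynEntourage σ W0 n := hz2
          have e1 := (mem_dynEntourage.1 h1) j hj
          have e2 := (mem_dynEntourage.1 h2) j hj
          rw [hW0def] at e1 e2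
          simp only [Set.mem_setOf_eq] at e1 e2
          rw [hσ] at e1 e2
          rw [shift_iterate j (X δ) 0, shift_iterate j z 0] at e1
          rw [shift_iterate j (X δ') 0, shift_iterate j z 0] at e2
          exact hne' (e1.trans e2.symm)
      have := hnet.card_le_netMaxcard (s := sF)
      calc ((2 : ℕ∞)) ^ n = ((sF.card : ℕ∞)) := by rw [hcard]; push_cast; ring
        _ ≤ netMaxcard σ S W0 n := this
    -- entropy lower bound
    have hlb : ENNReal.log 2 ≤ netEntropyEntourage σ S W0 := by
      apply le_limsup_of_frequently_le'
      apply Eventually.frequently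
      rw [eventually_atTop]
      refine ⟨1, fun n hn => ?_⟩
      have hn0 : (0 : EReal) < (n : EReal) := by exact_mod_cast Nat.pos_of_ne_zero (by omega)
      rw [EReal.le_div_iff_mul_le hn0 (natCast_ne_top n)]
      have e : ENNReal.log 2 * (n : EReal) = ENNReal.log ((2 : ℝ≥0∞) ^ n) := by
        rw [log_pow]
        exact mul_comm _ _
      rw [e]
      apply log_monotone
      have := key n
      have h2 : ((2 : ℝ≥0∞)) ^ n = (((2 : ℕ∞) ^ n : ℕ∞) : ℝ≥0∞) := by
        push_cast
        ring
      rw [h2]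
      exact ENat.toENNReal_le.2 this
    have hge : ENNReal.log 2 ≤ coverEntropy σ S :=
      hlb.trans (netEntropyEntourage_le_coverEntropy σ S hW0)
    rw [h0] at hge
    have : (0 : EReal) < ENNReal.log 2 := by
      rw [zero_lt_log_iff]
      norm_num
    exact absurd hge (not_le.2 this)
  · intro hfin
    exact entropy_zero_of_finite σ hne hfin
end

section
/- Let (Σ,*) be a 1-block quasi-group Markov shift over a nonempty finite alphabet A. If Σ is irreducible (the shift map σ on Σ is topologically transitive, i.e., there exists x ∈ Σ whose forward orbit {σ^m x : m ≥ 0} is dense in Σ) and Σ contains a constant sequence (there exists a ∈ A with T a a, so the constant sequence at a lies in Σ), then there exist n ≥ 1 and a shift-commuting homeomorphism from Σ onto the full shift ℤ → Fin n; that is, (Σ, σ) is topologically conjugate to a full shift (the finite quasigroup factor 𝔽 in the decomposition is trivial). -/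
open Function

section Core

variable {A : Type*} [Finite A]

theorem qdiv (op : A → A → A) (T : A → A → Prop)
    (hleft : ∀ a b c : A, op a b = op a c → b = c)
    (hcompat : ∀ a a' b b' : A, T a b → T a' b' → T (op a a') (op b b'))
    {x u c w : A} (hxu : T x u) (hcw : T c w) :
    ∃ d y, T d y ∧ op x d = c ∧ op u y = w := by
  classical
  let E := {p : A × A // T p.1 p.2}
  let F : E → E := fun e => ⟨(op x e.1.1, op u e.1.2), hcompat _ _ _ _ hxu e.2⟩
  have hinj : Injective F := by
    intro e f h
    have h1 : op x e.1.1 = op x f.1.1 := congrArg (Prod.fst ∘ Subtype.val) h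
    have h2 : op u e.1.2 = op u f.1.2 := congrArg (Prod.snd ∘ Subtype.val) h
    exact Subtype.ext (Prod.ext (hleft _ _ _ h1) (hleft _ _ _ h2))
  obtain ⟨e, he⟩ := (Finite.injective_iff_surjective.1 hinj) ⟨(c, w), hcw⟩
  exact ⟨e.1.1, e.1.2, e.2, congrArg (Prod.fst ∘ Subtype.val) he,
    congrArg (Prod.snd ∘ Subtype.val) he⟩

theorem qdivr (op : A → A → A) (T : A → A → Prop)
    (hright : ∀ a b c : A, op b a = op c a → b = c)
    (hcompat : ∀ a a' b b' : A, T a b → T a' b' → T (op a a') (op b b'))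
    {x u c w : A} (hxu : T x u) (hcw : T c w) :
    ∃ d y, T d y ∧ op d x = c ∧ op y u = w := by
  classical
  let E := {p : A × A // T p.1 p.2}
  let F : E → E := fun e => ⟨(op e.1.1 x, op e.1.2 u), hcompat _ _ _ _ e.2 hxu⟩
  have hinj : Injective F := by
    intro e f h
    have h1 : op e.1.1 x = op f.1.1 x := congrArg (Prod.fst ∘ Subtype.val) h
    have h2 : op e.1.2 u = op f.1.2 u := congrArg (Prod.snd ∘ Subtype.val) h
    exact Subtype.ext (Prod.ext (hright _ _ _ h1) (hright _ _ _ h2))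
  obtain ⟨e, he⟩ := (Finite.injective_iff_surjective.1 hinj) ⟨(c, w), hcw⟩
  exact ⟨e.1.1, e.1.2, e.2, congrArg (Prod.fst ∘ Subtype.val) he,
    congrArg (Prod.snd ∘ Subtype.val) he⟩

/-- successor-splitting: if `T x v` and `T (x*y) d` then `d = v*w` with `T y w`. -/
theorem succ_split (op : A → A → A) (T : A → A → Prop)
    (hleft : ∀ a b c : A, op a b = op a c → b = c)
    (hcompat : ∀ a a' b b' : A, T a b → T a' b' → T (op a a') (op b b'))
    {x v y d : A} (hxv : T x v) (hd : T (op x y) d) :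
    ∃ w, T y w ∧ op v w = d := by
  obtain ⟨d₁, y₁, hdy, h1, h2⟩ := qdiv op T hleft hcompat hxv hd
  have : d₁ = y := hleft _ _ _ h1
  subst this
  exact ⟨y₁, hdy, h2⟩

/-- right version: if `T x v` and `T (y*x) d` then `d = w*v` with `T y w`. -/
theorem succ_split_r (op : A → A → A) (T : A → A → Prop)
    (hright : ∀ a b c : A, op b a = op c a → b = c)
    (hcompat : ∀ a a' b b' : A, T a b → T a' b' → T (op a a') (op b b'))
    {x v y d : A} (hxv : T x v) (hd : T (op y x) d) :
    ∃ w, T y w ∧ op w v = d := by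
  obtain ⟨d₁, y₁, hdy, h1, h2⟩ := qdivr op T hright hcompat hxv hd
  have : d₁ = y := hright _ _ _ h1
  subst this
  exact ⟨y₁, hdy, h2⟩

theorem claim1 (op : A → A → A) (T : A → A → Prop)
    (hleft : ∀ a b c : A, op a b = op a c → b = c)
    (hright : ∀ a b c : A, op b a = op c a → b = c)
    (hpred : ∀ a : A, ∃ c, T c a)
    (hcompat : ∀ a a' b b' : A, T a b → T a' b' → T (op a a') (op b b'))
    {a b b' c : A} (hab : T a b) (hab' : T a b') (hcb : T c b) : T c b' := by
  have step1 : ∀ e y, T e (op y b) → T e (op y b') := by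
    intro e y h
    obtain ⟨d, z, hdz, hda, hzb⟩ := qdivr op T hright hcompat hab h
    have hzy : z = y := hright _ _ _ hzb
    subst hzy
    have := hcompat d a z b' hdz hab'
    rwa [hda] at this
  obtain ⟨p, hpa⟩ := hpred a
  have h2 : T (op p c) (op a b') := step1 _ _ (hcompat p c a b hpa hcb)
  obtain ⟨d, z, hdz, hdc, hzb'⟩ := qdiv op T hleft hcompat hpa h2
  have hd : d = c := hleft _ _ _ hdc
  have hz : z = b' := hleft _ _ _ hzb'
  subst hd; subst hz
  exact hdz

/-- dual Claim 1: common successor implies equal successor sets (one inclusion). -/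
theorem claim1d (op : A → A → A) (T : A → A → Prop)
    (hleft : ∀ a b c : A, op a b = op a c → b = c)
    (hright : ∀ a b c : A, op b a = op c a → b = c)
    (hsucc : ∀ a : A, ∃ b, T a b)
    (hcompat : ∀ a a' b b' : A, T a b → T a' b' → T (op a a') (op b b'))
    {a b b' c : A} (hba : T b a) (hb'a : T b' a) (hbc : T b c) : T b' c :=
  claim1 op (fun x y => T y x) hleft hright hsucc
    (fun a a' b b' h h' => hcompat b b' a a' h h') hba hb'a hbc

end Core


section Core
variable {A : Type*} [Finite A]

/-- monotone successor-set congruence for left multiplication -/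
theorem seq_mul_left (op : A → A → A) (T : A → A → Prop)
    (hleft : ∀ a b c : A, op a b = op a c → b = c)
    (hsucc : ∀ a : A, ∃ b, T a b)
    (hcompat : ∀ a a' b b' : A, T a b → T a' b' → T (op a a') (op b b'))
    {y y' : A} (h : ∀ c, T y c → T y' c) (u : A) :
    ∀ d, T (op u y) d → T (op u y') d := by
  obtain ⟨v, huv⟩ := hsucc u
  intro d hd
  obtain ⟨w, hyw, hvw⟩ := succ_split op T hleft hcompat huv hd
  have := hcompat u y' v w huv (h w hyw)
  rwa [hvw] at this

theorem seq_cancel_left (op : A → A → A) (T : A → A → Prop)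
    (hleft : ∀ a b c : A, op a b = op a c → b = c)
    (hsucc : ∀ a : A, ∃ b, T a b)
    (hcompat : ∀ a a' b b' : A, T a b → T a' b' → T (op a a') (op b b'))
    {y z u : A} (h : ∀ c, T (op u y) c → T (op u z) c) :
    ∀ c, T y c → T z c := by
  obtain ⟨v, huv⟩ := hsucc u
  intro b hyb
  have h2 := h _ (hcompat u y v b huv hyb)
  obtain ⟨w, hzw, hvw⟩ := succ_split op T hleft hcompat huv h2
  have : w = b := hleft _ _ _ hvw
  subst this
  exact hzw

end Core

/-- the topological transitivity hypothesis, in the exact shape of the theorem -/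
def DenseOrb (A : Type*) [TopologicalSpace A] (T : A → A → Prop) : Prop :=
  ∃ x ∈ {x : ℤ → A | ∀ i : ℤ, T (x i) (x (i + 1))},
    ∀ y ∈ {x : ℤ → A | ∀ i : ℤ, T (x i) (x (i + 1))},
      y ∈ closure {z : ℤ → A | ∃ m : ℕ,
        z = (fun w : ℤ → A => (fun i => w (i + 1) : ℤ → A))^[m] x}

/-- the conclusion, in the exact shape of the theorem -/
def FullConj (A : Type*) [TopologicalSpace A] (T : A → A → Prop) : Prop :=
  ∃ n : ℕ, 1 ≤ n ∧
    ∃ φ : {x : ℤ → A // ∀ i : ℤ, T (x i) (x (i + 1))} ≃ₜ (ℤ → Fin n),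
      ∀ x : {x : ℤ → A // ∀ i : ℤ, T (x i) (x (i + 1))},
        φ ⟨fun i => x.1 (i + 1), fun i => x.2 (i + 1)⟩ = fun i => φ x (i + 1)

theorem transfer_denseOrb {A B : Type*} [TopologicalSpace A] [DiscreteTopology A]
    [TopologicalSpace B] (g : A → B) (T : A → A → Prop) (TB : B → B → Prop)
    (hg : ∀ a b, T a b → TB (g a) (g b))
    (hlift : ∀ ξ : ℤ → B, (∀ i : ℤ, TB (ξ i) (ξ (i + 1))) →
      ∃ x : ℤ → A, (∀ i : ℤ, T (x i) (x (i + 1))) ∧ (fun i => g (x i)) = ξ)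
    (htrans : DenseOrb A T) : DenseOrb B TB := by
  obtain ⟨x, hx, hdense⟩ := htrans
  have hGcont : Continuous (fun w : ℤ → A => (fun i => g (w i) : ℤ → B)) := by
    refine continuous_pi fun i => ?_
    exact Continuous.comp (continuous_of_discreteTopology) (continuous_apply i)
  have hsemi : Function.Semiconj (fun w : ℤ → A => (fun i => g (w i) : ℤ → B))
      (fun w : ℤ → A => (fun i => w (i + 1) : ℤ → A))
      (fun w : ℤ → B => (fun i => w (i + 1) : ℤ → B)) := fun w => rfl
  refine ⟨fun i => g (x i), fun i => hg _ _ (hx i), ?_⟩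
  intro ybar hybar
  obtain ⟨y, hy, hgy⟩ := hlift ybar hybar
  have hyc := hdense y hy
  have h1 : ybar ∈ (fun w : ℤ → A => (fun i => g (w i) : ℤ → B)) '' closure
      {z : ℤ → A | ∃ m : ℕ, z = (fun w : ℤ → A => (fun i => w (i + 1) : ℤ → A))^[m] x} :=
    ⟨y, hyc, hgy⟩
  have h2 := image_closure_subset_closure_image (f := fun w : ℤ → A => (fun i => g (w i) : ℤ → B))
    (s := {z : ℤ → A | ∃ m : ℕ, z = (fun w : ℤ → A => (fun i => w (i + 1) : ℤ → A))^[m] x}) hGcont h1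
  refine closure_mono ?_ h2
  rintro _ ⟨z, ⟨m, rfl⟩, rfl⟩
  exact ⟨m, (hsemi.iterate_right m) x⟩



theorem shiftIter {A : Type*} (m : ℕ) (w : ℤ → A) (i : ℤ) :
    ((fun w : ℤ → A => (fun i => w (i + 1) : ℤ → A))^[m] w) i = w (i + (m : ℤ)) := by
  induction m generalizing w i with
  | zero => simp
  | succ m ih =>
    rw [Function.iterate_succ_apply]
    rw [ih (fun i => w (i + 1) : ℤ → A) i]
    congr 1
    push_cast
    ring

theorem caseC {A : Type*} [Fintype A] [Nonempty A] [TopologicalSpace A] [DiscreteTopology A]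
    (op : A → A → A)
    (hleft : ∀ a b c : A, op a b = op a c → b = c)
    (hright : ∀ a b c : A, op b a = op c a → b = c)
    (T : A → A → Prop)
    (hsucc : ∀ a : A, ∃ b, T a b)
    (hpred : ∀ a : A, ∃ c, T c a)
    (hcompat : ∀ a a' b b' : A, T a b → T a' b' → T (op a a') (op b b'))
    (hSinj : ∀ a a' : A, (∀ c, T a c ↔ T a' c) → a = a')
    (htrans : DenseOrb A T) (hconst : ∃ a : A, T a a) : FullConj A T := by
  classical
  -- each letter has a unique predecessor
  have uniqpred : ∀ b c c' : A, T c b → T c' b → c = c' := by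
    intro b c c' hcb hc'b
    exact hSinj c c' fun d =>
      ⟨fun h => claim1d op T hleft hright hsucc hcompat hcb hc'b h,
       fun h => claim1d op T hleft hright hsucc hcompat hc'b hcb h⟩
  set g : A → A := fun b => Classical.choose (hpred b) with hgdef
  have hg : ∀ b, T (g b) b := fun b => Classical.choose_spec (hpred b)
  have gspec : ∀ a b : A, T a b → g b = a := fun a b hab => uniqpred b (g b) a (hg b) hab
  have gsurj : Function.Surjective g := by
    intro a
    obtain ⟨b, hab⟩ := hsucc a
    exact ⟨b, gspec a b hab⟩
  have ginj : Function.Injective g := Finite.injective_iff_surjective.2 gsurj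
  obtain ⟨a₀, ha₀⟩ := hconst
  have ga₀ : g a₀ = a₀ := gspec _ _ ha₀
  obtain ⟨x, hx, hdense⟩ := htrans
  -- the dense orbit point passes through a₀
  have hconstmem : (fun _ : ℤ => a₀) ∈ {x : ℤ → A | ∀ i : ℤ, T (x i) (x (i + 1))} :=
    fun i => ha₀
  have hcc := hdense _ hconstmem
  have hVopen : IsOpen {w : ℤ → A | w 0 = a₀} := by
    have : {w : ℤ → A | w 0 = a₀} = (fun w : ℤ → A => w 0) ⁻¹' {a₀} := rfl
    rw [this]
    exact (continuous_apply (0 : ℤ)).isOpen_preimage _ (isOpen_discrete _)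
  obtain ⟨z, hz1, hz2⟩ := mem_closure_iff.1 hcc _ hVopen rfl
  obtain ⟨m, rfl⟩ := hz2
  have hxm : x ((0 : ℤ) + (m : ℤ)) = a₀ := by
    have := hz1
    rwa [Set.mem_setOf_eq, shiftIter] at this
  -- x is constantly a₀
  have hstep : ∀ i : ℤ, g (x (i + 1)) = x i := fun i => gspec _ _ (hx i)
  have hxall : ∀ k : ℤ, x ((m : ℤ) + k) = a₀ := by
    intro k
    induction k using Int.induction_on with
    | zero => simpa using hxm
    | succ k ih =>
      have h1 : g (x ((m : ℤ) + k + 1)) = x ((m : ℤ) + k) := hstep _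
      have h2 : x ((m : ℤ) + (k + 1)) = x ((m : ℤ) + k + 1) := by ring_nf
      apply ginj
      rw [h2, h1, ih, ga₀]
    | pred k ih =>
      have h1 : g (x ((m : ℤ) + (-k - 1) + 1)) = x ((m : ℤ) + (-k - 1)) := hstep _
      have h2 : (m : ℤ) + (-k - 1) + 1 = (m : ℤ) + (-k) := by ring
      rw [h2] at h1
      rw [show ((m : ℤ) + (-(k:ℤ) - 1)) = (m:ℤ) + (-k-1) by ring, ← h1, ih, ga₀]
  have hxconst : ∀ i : ℤ, x i = a₀ := by
    intro i
    have := hxall (i - (m : ℤ))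
    rwa [show (m : ℤ) + (i - (m : ℤ)) = i by ring] at this
  -- every point of the shift is the constant point
  have hsing : ∀ y ∈ {x : ℤ → A | ∀ i : ℤ, T (x i) (x (i + 1))}, y = fun _ => a₀ := by
    intro y hy
    have h1 := hdense y hy
    have h2 : {z : ℤ → A | ∃ m : ℕ,
        z = (fun w : ℤ → A => (fun i => w (i + 1) : ℤ → A))^[m] x} ⊆ {fun _ => a₀} := by
      rintro _ ⟨m', rfl⟩
      have : ((fun w : ℤ → A => (fun i => w (i + 1) : ℤ → A))^[m'] x) = fun _ => a₀ := by
        funext i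
        rw [shiftIter]
        exact hxconst _
      simp [this]
    have h3 := closure_mono h2 h1
    rwa [closure_singleton, Set.mem_singleton_iff] at h3
  -- every letter equals a₀
  have hA1 : ∀ a : A, a = a₀ := by
    intro a
    set e : Equiv.Perm A := Equiv.ofBijective g ⟨ginj, gsurj⟩ with hedef
    have he : ∀ b, e b = g b := fun b => rfl
    set xa : ℤ → A := fun i => (e ^ (-i) : Equiv.Perm A) a with hxadef
    have hxa : xa ∈ {x : ℤ → A | ∀ i : ℤ, T (x i) (x (i + 1))} := by
      intro i
      have h1 : g (xa (i + 1)) = xa i := by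
        rw [hxadef]
        simp only
        rw [← he]
        have : e ((e ^ (-(i + 1)) : Equiv.Perm A) a) = ((e ^ (1 + -(i + 1)) : Equiv.Perm A)) a := by
          rw [zpow_add, Equiv.Perm.mul_apply, zpow_one]
        rw [this, show (1 + -(i+1) : ℤ) = -i by ring]
      rw [← h1]
      exact hg _
    have := hsing xa hxa
    have h0 : xa 0 = a := by
      rw [hxadef]; simp
    rw [this] at h0
    exact h0.symm
  -- build the conjugacy with n = 1
  refine ⟨1, le_refl 1, ?_⟩
  refine ⟨⟨⟨fun _ => (fun _ => (0 : Fin 1)), fun _ => ⟨fun _ => a₀, fun i => ha₀⟩, ?_, ?_⟩,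
    continuous_const, continuous_const⟩, ?_⟩
  · intro x'
    exact Subtype.ext (funext fun i => (hA1 (x'.1 i)).symm)
  · intro y
    funext i
    exact Subsingleton.elim _ _
  · intro x'
    funext i
    exact Subsingleton.elim _ _


set_option maxHeartbeats 1000000 in
theorem caseB {A : Type u} [Fintype A] [Nonempty A] [TopologicalSpace A] [DiscreteTopology A]
    (op : A → A → A)
    (hleft : ∀ a b c : A, op a b = op a c → b = c)
    (hright : ∀ a b c : A, op b a = op c a → b = c)
    (T : A → A → Prop)
    (hsucc : ∀ a : A, ∃ b, T a b)
    (hpred : ∀ a : A, ∃ c, T c a)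
    (hcompat : ∀ a a' b b' : A, T a b → T a' b' → T (op a a') (op b b'))
    (hTau1 : ∀ a a' : A, (∀ c, T a c ↔ T a' c) → (∀ c, T c a ↔ T c a') → a = a')
    (hSex : ∃ a a' : A, a ≠ a' ∧ (∀ c, T a c ↔ T a' c))
    (htrans : DenseOrb A T) (hconst : ∃ a : A, T a a)
    (IH : ∀ (B : Type u) [Fintype B] [Nonempty B] [TopologicalSpace B] [DiscreteTopology B],
        Fintype.card B < Fintype.card A →
        ∀ (opB : B → B → B), (∀ a b c : B, opB a b = opB a c → b = c) →
        (∀ a b c : B, opB b a = opB c a → b = c) →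
        ∀ (TB : B → B → Prop), (∀ a : B, ∃ b, TB a b) → (∀ a : B, ∃ c, TB c a) →
        (∀ a a' b b' : B, TB a b → TB a' b' → TB (opB a a') (opB b b')) →
        DenseOrb B TB → (∃ a : B, TB a a) → FullConj B TB) :
    FullConj A T := by
  classical
  set r : A → A → Prop := fun a a' => ∀ c, T a c ↔ T a' c with hrdef
  have requiv : Equivalence r :=
    ⟨fun a c => Iff.rfl, fun h c => (h c).symm, fun h h' c => (h c).trans (h' c)⟩
  set s : Setoid A := ⟨r, requiv⟩ with hsdef
  let B := Quotient s
  -- congruence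
  have hcongl : ∀ (u : A) {y y' : A}, r y y' → r (op u y) (op u y') := by
    intro u y y' h c
    exact ⟨seq_mul_left op T hleft hsucc hcompat (fun c => (h c).1) u c,
           seq_mul_left op T hleft hsucc hcompat (fun c => (h c).2) u c⟩
  have hcongr : ∀ (u : A) {y y' : A}, r y y' → r (op y u) (op y' u) := by
    intro u y y' h c
    exact ⟨seq_mul_left (fun x y => op y x) T hright hsucc
        (fun a a' b b' h h' => hcompat a' a b' b h' h) (fun c => (h c).1) u c,
      seq_mul_left (fun x y => op y x) T hright hsucc
        (fun a a' b b' h h' => hcompat a' a b' b h' h) (fun c => (h c).2) u c⟩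
  have hcong : ∀ (a b a' b' : A), r a a' → r b b' → r (op a b) (op a' b') := by
    intro a b a' b' ha hb
    exact requiv.trans (hcongl a hb) (hcongr b' ha)
  have hcanl : ∀ (u : A) {y z : A}, r (op u y) (op u z) → r y z := by
    intro u y z h c
    exact ⟨seq_cancel_left op T hleft hsucc hcompat (fun c => (h c).1) c,
           seq_cancel_left op T hleft hsucc hcompat (fun c => (h c).2) c⟩
  have hcanr : ∀ (u : A) {y z : A}, r (op y u) (op z u) → r y z := by
    intro u y z h c
    exact ⟨seq_cancel_left (fun x y => op y x) T hright hsucc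
        (fun a a' b b' h h' => hcompat a' a b' b h' h) (fun c => (h c).1) c,
      seq_cancel_left (fun x y => op y x) T hright hsucc
        (fun a a' b b' h h' => hcompat a' a b' b h' h) (fun c => (h c).2) c⟩
  -- quotient structure
  let opB : B → B → B := Quotient.map₂ op (fun a a' ha b b' hb => hcong a b a' b' ha hb)
  let TB : B → B → Prop := fun ξ η => ∃ a b : A, T a b ∧ Quotient.mk s a = ξ ∧ Quotient.mk s b = η
  have hmap2 : ∀ a b : A, opB (Quotient.mk s a) (Quotient.mk s b) = Quotient.mk s (op a b) :=
    fun a b => rfl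
  have hleftB : ∀ ξ η ζ : B, opB ξ η = opB ξ ζ → η = ζ := by
    intro ξ η ζ
    induction ξ using Quotient.inductionOn with | _ u =>
    induction η using Quotient.inductionOn with | _ y =>
    induction ζ using Quotient.inductionOn with | _ z =>
    intro h
    rw [hmap2, hmap2] at h
    exact Quotient.sound (hcanl u (Quotient.exact h))
  have hrightB : ∀ ξ η ζ : B, opB η ξ = opB ζ ξ → η = ζ := by
    intro ξ η ζ
    induction ξ using Quotient.inductionOn with | _ u =>
    induction η using Quotient.inductionOn with | _ y =>
    induction ζ using Quotient.inductionOn with | _ z =>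
    intro h
    rw [hmap2, hmap2] at h
    exact Quotient.sound (hcanr u (Quotient.exact h))
  have hsuccB : ∀ ξ : B, ∃ η, TB ξ η := by
    intro ξ
    induction ξ using Quotient.inductionOn with | _ a =>
    obtain ⟨b, hb⟩ := hsucc a
    exact ⟨Quotient.mk s b, a, b, hb, rfl, rfl⟩
  have hpredB : ∀ ξ : B, ∃ η, TB η ξ := by
    intro ξ
    induction ξ using Quotient.inductionOn with | _ a =>
    obtain ⟨b, hb⟩ := hpred a
    exact ⟨Quotient.mk s b, b, a, hb, rfl, rfl⟩
  have hcompatB : ∀ ξ ξ' η η' : B, TB ξ η → TB ξ' η' → TB (opB ξ ξ') (opB η η') := by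
    rintro ξ ξ' η η' ⟨a, b, hab, rfl, rfl⟩ ⟨a', b', hab', rfl, rfl⟩
    exact ⟨op a a', op b b', hcompat _ _ _ _ hab hab', rfl, rfl⟩
  -- lifting paths
  have hTBl : ∀ ξ : ℤ → B, (∀ i : ℤ, TB (ξ i) (ξ (i + 1))) →
      ∃ x : ℤ → A, (∀ i : ℤ, T (x i) (x (i + 1))) ∧
        (fun i => Quotient.mk s (x i)) = ξ := by
    intro ξ hξ
    have H : ∀ i : ℤ, ∃ p : A × A, T p.1 p.2 ∧ Quotient.mk s p.1 = ξ i ∧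
        Quotient.mk s p.2 = ξ (i + 1) := by
      intro i
      obtain ⟨a, b, h1, h2, h3⟩ := hξ i
      exact ⟨(a, b), h1, h2, h3⟩
    choose f hf1 hf2 hf3 using H
    refine ⟨fun i => (f (i - 1)).2, ?_, ?_⟩
    · intro i
      have e0 : (i + 1 : ℤ) - 1 = i := by ring
      show T ((f (i - 1)).2) ((f (i + 1 - 1)).2)
      rw [e0]
      have e1 : Quotient.mk s ((f (i - 1)).2) = Quotient.mk s ((f i).1) := by
        rw [hf3, hf2]
        congr 1
        ring
      exact ((Quotient.exact e1) _).2 (hf1 i)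
    · funext i
      rw [hf3 (i - 1)]
      congr 1
      ring
  -- instances on B
  haveI : Finite B := Quotient.finite s
  haveI : Nonempty B := Nonempty.map (Quotient.mk s) inferInstance
  letI : Fintype B := Fintype.ofFinite B
  letI : TopologicalSpace B := ⊥
  haveI : DiscreteTopology B := ⟨rfl⟩
  have hcard : Fintype.card B < Fintype.card A := by
    apply Fintype.card_lt_of_surjective_not_injective (Quotient.mk s)
    · intro ξ
      exact Quotient.exists_rep ξ
    · intro hinj
      obtain ⟨a, a', hne, hr⟩ := hSex
      exact hne (hinj (Quotient.sound hr))
  have htransB : DenseOrb B TB :=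
    transfer_denseOrb (Quotient.mk s) T TB (fun a b h => ⟨a, b, h, rfl, rfl⟩) hTBl htrans
  obtain ⟨a₀, ha₀⟩ := hconst
  have hconstB : ∃ ξ : B, TB ξ ξ := ⟨Quotient.mk s a₀, a₀, a₀, ha₀, rfl, rfl⟩
  obtain ⟨n, hn, ψ, hψ⟩ := IH B hcard opB hleftB hrightB TB hsuccB hpredB hcompatB htransB hconstB
  -- assemble the conjugacy
  let Hmap : {x : ℤ → A // ∀ i : ℤ, T (x i) (x (i + 1))} →
      {x : ℤ → B // ∀ i : ℤ, TB (x i) (x (i + 1))} :=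
    fun x => ⟨fun i => Quotient.mk s (x.1 i), fun i => ⟨x.1 i, x.1 (i + 1), x.2 i, rfl, rfl⟩⟩
  have Hinj : Function.Injective Hmap := by
    intro x y h
    have hc : ∀ i : ℤ, Quotient.mk s (x.1 i) = Quotient.mk s (y.1 i) :=
      fun i => congrFun (congrArg Subtype.val h) i
    refine Subtype.ext (funext fun i => ?_)
    have hrS : r (x.1 (i - 1)) (y.1 (i - 1)) := Quotient.exact (hc (i - 1))
    have e0 : (i - 1 : ℤ) + 1 = i := by ring
    have hx1 : T (x.1 (i - 1)) (x.1 i) := by have := x.2 (i - 1); rwa [e0] at this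
    have hy1 : T (y.1 (i - 1)) (y.1 i) := by have := y.2 (i - 1); rwa [e0] at this
    have hxy : T (x.1 (i - 1)) (y.1 i) := (hrS _).2 hy1
    have hPEq : ∀ c, T c (x.1 i) ↔ T c (y.1 i) := fun c =>
      ⟨claim1 op T hleft hright hpred hcompat hx1 hxy,
       claim1 op T hleft hright hpred hcompat hxy hx1⟩
    exact hTau1 _ _ (Quotient.exact (hc i)) hPEq
  have Hsurj : Function.Surjective Hmap := by
    intro ξ
    obtain ⟨x, hx, hmk⟩ := hTBl ξ.1 ξ.2
    exact ⟨⟨x, hx⟩, Subtype.ext hmk⟩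
  have Hcont : Continuous Hmap := by
    refine Continuous.subtype_mk (continuous_pi fun i => ?_) _
    exact Continuous.comp continuous_of_discreteTopology
      ((continuous_apply i).comp continuous_subtype_val)
  -- compactness
  have hclosed : IsClosed {x : ℤ → A | ∀ i : ℤ, T (x i) (x (i + 1))} := by
    have he : {x : ℤ → A | ∀ i : ℤ, T (x i) (x (i + 1))} =
        ⋂ i : ℤ, {x : ℤ → A | T (x i) (x (i + 1))} := by
      ext w; simp [Set.mem_iInter]
    rw [he]
    refine isClosed_iInter fun i => ?_
    have : {x : ℤ → A | T (x i) (x (i + 1))} =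
        (fun x : ℤ → A => (x i, x (i + 1))) ⁻¹' {p : A × A | T p.1 p.2} := rfl
    rw [this]
    exact IsClosed.preimage ((continuous_apply i).prodMk (continuous_apply (i + 1)))
      (isClosed_discrete _)
  haveI : CompactSpace {x : ℤ → A // ∀ i : ℤ, T (x i) (x (i + 1))} :=
    isCompact_iff_compactSpace.1 hclosed.isCompact
  let φequiv : {x : ℤ → A // ∀ i : ℤ, T (x i) (x (i + 1))} ≃ (ℤ → Fin n) :=
    (Equiv.ofBijective Hmap ⟨Hinj, Hsurj⟩).trans ψ.toEquiv
  have hφcont : Continuous φequiv := ψ.continuous.comp Hcont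
  refine ⟨n, hn, Continuous.homeoOfEquivCompactToT2 (f := φequiv) hφcont, ?_⟩
  intro x
  show ψ (Hmap ⟨fun i => x.1 (i + 1), fun i => x.2 (i + 1)⟩) = fun i => ψ (Hmap x) (i + 1)
  have e : Hmap ⟨fun i => x.1 (i + 1), fun i => x.2 (i + 1)⟩ =
      ⟨fun i => (Hmap x).1 (i + 1), fun i => (Hmap x).2 (i + 1)⟩ := Subtype.ext rfl
  rw [e]
  exact hψ (Hmap x)


set_option maxHeartbeats 1600000 in
theorem caseA {A : Type u} [Fintype A] [Nonempty A] [TopologicalSpace A] [DiscreteTopology A]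
    (op : A → A → A)
    (hleft : ∀ a b c : A, op a b = op a c → b = c)
    (hright : ∀ a b c : A, op b a = op c a → b = c)
    (T : A → A → Prop)
    (hsucc : ∀ a : A, ∃ b, T a b)
    (hpred : ∀ a : A, ∃ c, T c a)
    (hcompat : ∀ a a' b b' : A, T a b → T a' b' → T (op a a') (op b b'))
    (hSPex : ∃ a a' : A, a ≠ a' ∧ (∀ c, T a c ↔ T a' c) ∧ (∀ c, T c a ↔ T c a'))
    (htrans : DenseOrb A T) (hconst : ∃ a : A, T a a)
    (IH : ∀ (B : Type u) [Fintype B] [Nonempty B] [TopologicalSpace B] [DiscreteTopology B],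
        Fintype.card B < Fintype.card A →
        ∀ (opB : B → B → B), (∀ a b c : B, opB a b = opB a c → b = c) →
        (∀ a b c : B, opB b a = opB c a → b = c) →
        ∀ (TB : B → B → Prop), (∀ a : B, ∃ b, TB a b) → (∀ a : B, ∃ c, TB c a) →
        (∀ a a' b b' : B, TB a b → TB a' b' → TB (opB a a') (opB b b')) →
        DenseOrb B TB → (∃ a : B, TB a a) → FullConj B TB) :
    FullConj A T := by
  classical
  set r : A → A → Prop :=
    fun a a' => (∀ c, T a c ↔ T a' c) ∧ (∀ c, T c a ↔ T c a') with hrdef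
  have requiv : Equivalence r :=
    ⟨fun a => ⟨fun c => Iff.rfl, fun c => Iff.rfl⟩,
     fun h => ⟨fun c => (h.1 c).symm, fun c => (h.2 c).symm⟩,
     fun h h' => ⟨fun c => (h.1 c).trans (h'.1 c), fun c => (h.2 c).trans (h'.2 c)⟩⟩
  set s : Setoid A := ⟨r, requiv⟩ with hsdef
  let B := Quotient s
  -- congruence (S-part and P-part, each for left and right multiplication)
  have hcompatT : ∀ a a' b b' : A, (fun x y => T y x) a b → (fun x y => T y x) a' b' →
      (fun x y => T y x) (op a a') (op b b') := fun a a' b b' h h' => hcompat b b' a a' h h'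
  have hcompatO : ∀ a a' b b' : A, T a b → T a' b' → T ((fun x y => op y x) a a')
      ((fun x y => op y x) b b') := fun a a' b b' h h' => hcompat a' a b' b h' h
  have hcompatOT : ∀ a a' b b' : A, (fun x y => T y x) a b → (fun x y => T y x) a' b' →
      (fun x y => T y x) ((fun x y => op y x) a a') ((fun x y => op y x) b b') :=
    fun a a' b b' h h' => hcompat b' b a' a h' h
  have hcong : ∀ (a b a' b' : A), r a a' → r b b' → r (op a b) (op a' b') := by
    intro a b a' b' ha hb
    have hl : r (op a b) (op a b') := by
      constructor
      · intro c
        exact ⟨seq_mul_left op T hleft hsucc hcompat (fun c => (hb.1 c).1) a c,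
               seq_mul_left op T hleft hsucc hcompat (fun c => (hb.1 c).2) a c⟩
      · intro c
        exact ⟨seq_mul_left op (fun x y => T y x) hleft hpred hcompatT (fun c => (hb.2 c).1) a c,
               seq_mul_left op (fun x y => T y x) hleft hpred hcompatT (fun c => (hb.2 c).2) a c⟩
    have hr2 : r (op a b') (op a' b') := by
      constructor
      · intro c
        exact ⟨seq_mul_left (fun x y => op y x) T hright hsucc hcompatO (fun c => (ha.1 c).1) b' c,
               seq_mul_left (fun x y => op y x) T hright hsucc hcompatO (fun c => (ha.1 c).2) b' c⟩
      · intro c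
        exact ⟨seq_mul_left (fun x y => op y x) (fun x y => T y x) hright hpred hcompatOT
            (fun c => (ha.2 c).1) b' c,
          seq_mul_left (fun x y => op y x) (fun x y => T y x) hright hpred hcompatOT
            (fun c => (ha.2 c).2) b' c⟩
    exact requiv.trans hl hr2
  have hcanl : ∀ (u : A) {y z : A}, r (op u y) (op u z) → r y z := by
    intro u y z h
    constructor
    · intro c
      exact ⟨seq_cancel_left op T hleft hsucc hcompat (fun c => (h.1 c).1) c,
             seq_cancel_left op T hleft hsucc hcompat (fun c => (h.1 c).2) c⟩
    · intro c
      exact ⟨seq_cancel_left op (fun x y => T y x) hleft hpred hcompatT (fun c => (h.2 c).1) c,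
             seq_cancel_left op (fun x y => T y x) hleft hpred hcompatT (fun c => (h.2 c).2) c⟩
  have hcanr : ∀ (u : A) {y z : A}, r (op y u) (op z u) → r y z := by
    intro u y z h
    constructor
    · intro c
      exact ⟨seq_cancel_left (fun x y => op y x) T hright hsucc hcompatO (fun c => (h.1 c).1) c,
             seq_cancel_left (fun x y => op y x) T hright hsucc hcompatO (fun c => (h.1 c).2) c⟩
    · intro c
      exact ⟨seq_cancel_left (fun x y => op y x) (fun x y => T y x) hright hpred hcompatOT
          (fun c => (h.2 c).1) c,
        seq_cancel_left (fun x y => op y x) (fun x y => T y x) hright hpred hcompatOT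
          (fun c => (h.2 c).2) c⟩
  -- quotient structure
  let opB : B → B → B := Quotient.map₂ op (fun a a' ha b b' hb => hcong a b a' b' ha hb)
  let TB : B → B → Prop := fun ξ η => ∃ a b : A, T a b ∧ Quotient.mk s a = ξ ∧ Quotient.mk s b = η
  have hmap2 : ∀ a b : A, opB (Quotient.mk s a) (Quotient.mk s b) = Quotient.mk s (op a b) :=
    fun a b => rfl
  have hleftB : ∀ ξ η ζ : B, opB ξ η = opB ξ ζ → η = ζ := by
    intro ξ η ζ
    induction ξ using Quotient.inductionOn with | _ u =>
    induction η using Quotient.inductionOn with | _ y =>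
    induction ζ using Quotient.inductionOn with | _ z =>
    intro h
    rw [hmap2, hmap2] at h
    exact Quotient.sound (hcanl u (Quotient.exact h))
  have hrightB : ∀ ξ η ζ : B, opB η ξ = opB ζ ξ → η = ζ := by
    intro ξ η ζ
    induction ξ using Quotient.inductionOn with | _ u =>
    induction η using Quotient.inductionOn with | _ y =>
    induction ζ using Quotient.inductionOn with | _ z =>
    intro h
    rw [hmap2, hmap2] at h
    exact Quotient.sound (hcanr u (Quotient.exact h))
  have hsuccB : ∀ ξ : B, ∃ η, TB ξ η := by
    intro ξ
    induction ξ using Quotient.inductionOn with | _ a =>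
    obtain ⟨b, hb⟩ := hsucc a
    exact ⟨Quotient.mk s b, a, b, hb, rfl, rfl⟩
  have hpredB : ∀ ξ : B, ∃ η, TB η ξ := by
    intro ξ
    induction ξ using Quotient.inductionOn with | _ a =>
    obtain ⟨b, hb⟩ := hpred a
    exact ⟨Quotient.mk s b, b, a, hb, rfl, rfl⟩
  have hcompatB : ∀ ξ ξ' η η' : B, TB ξ η → TB ξ' η' → TB (opB ξ ξ') (opB η η') := by
    rintro ξ ξ' η η' ⟨a, b, hab, rfl, rfl⟩ ⟨a', b', hab', rfl, rfl⟩
    exact ⟨op a a', op b b', hcompat _ _ _ _ hab hab', rfl, rfl⟩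
  -- T is determined by the classes
  have hTdet : ∀ a b a' b' : A, T a b → r a a' → r b b' → T a' b' := by
    intro a b a' b' h ha hb
    exact (ha.1 b').1 ((hb.2 a).1 h)
  have hTBdet : ∀ a b : A, TB (Quotient.mk s a) (Quotient.mk s b) → T a b := by
    intro a b ⟨a₁, b₁, h, e1, e2⟩
    exact hTdet a₁ b₁ a b h (Quotient.exact e1) (Quotient.exact e2)
  have hTBl : ∀ ξ : ℤ → B, (∀ i : ℤ, TB (ξ i) (ξ (i + 1))) →
      ∃ x : ℤ → A, (∀ i : ℤ, T (x i) (x (i + 1))) ∧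
        (fun i => Quotient.mk s (x i)) = ξ := by
    intro ξ hξ
    refine ⟨fun i => (ξ i).out, fun i => ?_, funext fun i => Quotient.out_eq _⟩
    apply hTBdet
    rw [Quotient.out_eq, Quotient.out_eq]
    exact hξ i
  -- instances on B
  haveI : Finite B := Quotient.finite s
  haveI : Nonempty B := Nonempty.map (Quotient.mk s) inferInstance
  letI : Fintype B := Fintype.ofFinite B
  letI : TopologicalSpace B := ⊥
  haveI : DiscreteTopology B := ⟨rfl⟩
  have hcard : Fintype.card B < Fintype.card A := by
    apply Fintype.card_lt_of_surjective_not_injective (Quotient.mk s)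
    · intro ξ; exact Quotient.exists_rep ξ
    · intro hinj
      obtain ⟨a, a', hne, h1, h2⟩ := hSPex
      exact hne (hinj (Quotient.sound ⟨h1, h2⟩))
  have htransB : DenseOrb B TB :=
    transfer_denseOrb (Quotient.mk s) T TB (fun a b h => ⟨a, b, h, rfl, rfl⟩) hTBl htrans
  obtain ⟨a₀, ha₀⟩ := hconst
  have hconstB : ∃ ξ : B, TB ξ ξ := ⟨Quotient.mk s a₀, a₀, a₀, ha₀, rfl, rfl⟩
  obtain ⟨n, hn, ψ, hψ⟩ := IH B hcard opB hleftB hrightB TB hsuccB hpredB hcompatB htransB hconstB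
  -- uniform fibre size
  have hfible : ∀ ξ η : B, Nat.card {a : A // Quotient.mk s a = ξ} ≤
      Nat.card {a : A // Quotient.mk s a = η} := by
    intro ξ η
    obtain ⟨u, hu⟩ := Finite.injective_iff_surjective.1
      (fun u u' (h : op u ξ.out = op u' ξ.out) => hright _ _ _ h) η.out
    have hmapfib : ∀ a : A, Quotient.mk s a = ξ → Quotient.mk s (op u a) = η := by
      intro a ha
      have h1 : r a ξ.out := Quotient.exact (ha.trans (Quotient.out_eq ξ).symm)
      have h2 : r (op u a) (op u ξ.out) := hcong u a u ξ.out (requiv.refl u) h1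
      rw [← Quotient.out_eq η, ← hu]
      exact Quotient.sound h2
    refine Nat.card_le_card_of_injective
      (fun p => ⟨op u p.1, hmapfib p.1 p.2⟩) ?_
    intro p q h
    exact Subtype.ext (hleft _ _ _ (congrArg Subtype.val h))
  set τ : ℕ := Nat.card {a : A // Quotient.mk s a = Quotient.mk s a₀} with hτdef
  have hτall : ∀ ξ : B, Nat.card {a : A // Quotient.mk s a = ξ} = τ :=
    fun ξ => le_antisymm (hfible _ _) (hfible _ _)
  have hτpos : 1 ≤ τ := by
    rw [hτdef]
    haveI : Nonempty {a : A // Quotient.mk s a = Quotient.mk s a₀} := ⟨⟨a₀, rfl⟩⟩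
    exact Nat.card_pos
  -- the indexing equivalence A ≃ B × Fin τ
  let eξ : ∀ ξ : B, {a : A // Quotient.mk s a = ξ} ≃ Fin τ :=
    fun ξ => Finite.equivFinOfCardEq (hτall ξ)
  let g : A ≃ B × Fin τ :=
    ((Equiv.sigmaFiberEquiv (fun a : A => Quotient.mk s a)).symm.trans
      (Equiv.sigmaCongrRight eξ)).trans (Equiv.sigmaEquivProd B (Fin τ))
  have hg1 : ∀ a : A, (g a).1 = Quotient.mk s a := fun a => rfl
  have hg2 : ∀ (ξ : B) (j : Fin τ), Quotient.mk s (g.symm (ξ, j)) = ξ := by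
    intro ξ j
    have := hg1 (g.symm (ξ, j))
    rw [Equiv.apply_symm_apply] at this
    exact this.symm
  -- assemble
  let Hmap : {x : ℤ → A // ∀ i : ℤ, T (x i) (x (i + 1))} →
      {x : ℤ → B // ∀ i : ℤ, TB (x i) (x (i + 1))} :=
    fun x => ⟨fun i => Quotient.mk s (x.1 i), fun i => ⟨x.1 i, x.1 (i + 1), x.2 i, rfl, rfl⟩⟩
  let φto : {x : ℤ → A // ∀ i : ℤ, T (x i) (x (i + 1))} → (ℤ → Fin (n * τ)) :=
    fun x => fun i => finProdFinEquiv (ψ (Hmap x) i, (g (x.1 i)).2)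
  let φinvraw : (ℤ → Fin (n * τ)) → (ℤ → A) := fun y =>
    fun i => g.symm ((ψ.symm (fun i => (finProdFinEquiv.symm (y i)).1)).1 i,
      (finProdFinEquiv.symm (y i)).2)
  have φinvmem : ∀ y : ℤ → Fin (n * τ), ∀ i : ℤ, T (φinvraw y i) (φinvraw y (i + 1)) := by
    intro y i
    apply hTBdet
    rw [hg2, hg2]
    exact (ψ.symm (fun i => (finProdFinEquiv.symm (y i)).1)).2 i
  have hHmapinv : ∀ y : ℤ → Fin (n * τ),
      Hmap ⟨φinvraw y, φinvmem y⟩ = ψ.symm (fun i => (finProdFinEquiv.symm (y i)).1) := by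
    intro y
    refine Subtype.ext (funext fun i => ?_)
    exact hg2 _ _
  let φequiv : {x : ℤ → A // ∀ i : ℤ, T (x i) (x (i + 1))} ≃ (ℤ → Fin (n * τ)) :=
    { toFun := φto
      invFun := fun y => ⟨φinvraw y, φinvmem y⟩
      left_inv := by
        intro x
        refine Subtype.ext (funext fun i => ?_)
        show g.symm ((ψ.symm (fun i => (finProdFinEquiv.symm (φto x i)).1)).1 i,
          (finProdFinEquiv.symm (φto x i)).2) = x.1 i
        have hy1 : (fun i => (finProdFinEquiv.symm (φto x i)).1) = ψ (Hmap x) := by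
          funext j
          show (finProdFinEquiv.symm (finProdFinEquiv (ψ (Hmap x) j, (g (x.1 j)).2))).1 = _
          rw [Equiv.symm_apply_apply]
        have hy2 : (finProdFinEquiv.symm (φto x i)).2 = (g (x.1 i)).2 := by
          show (finProdFinEquiv.symm (finProdFinEquiv (ψ (Hmap x) i, (g (x.1 i)).2))).2 = _
          rw [Equiv.symm_apply_apply]
        rw [hy1, hy2, Homeomorph.symm_apply_apply]
        have : ((Hmap x).1 i, (g (x.1 i)).2) = g (x.1 i) := by
          have h1 : (Hmap x).1 i = (g (x.1 i)).1 := (hg1 (x.1 i)).symm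
          exact Prod.ext h1 rfl
        rw [this, Equiv.symm_apply_apply]
      right_inv := by
        intro y
        funext i
        show finProdFinEquiv (ψ (Hmap ⟨φinvraw y, φinvmem y⟩) i, (g (φinvraw y i)).2) = y i
        rw [hHmapinv y]
        have h2 : (g (φinvraw y i)).2 = (finProdFinEquiv.symm (y i)).2 := by
          show (g (g.symm _)).2 = _
          rw [Equiv.apply_symm_apply]
        rw [h2, Homeomorph.apply_symm_apply]
        have : ((fun i => (finProdFinEquiv.symm (y i)).1) i, (finProdFinEquiv.symm (y i)).2)
            = finProdFinEquiv.symm (y i) := rfl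
        rw [this, Equiv.apply_symm_apply] }
  -- compactness & continuity
  have hclosed : IsClosed {x : ℤ → A | ∀ i : ℤ, T (x i) (x (i + 1))} := by
    have he : {x : ℤ → A | ∀ i : ℤ, T (x i) (x (i + 1))} =
        ⋂ i : ℤ, {x : ℤ → A | T (x i) (x (i + 1))} := by
      ext w; simp [Set.mem_iInter]
    rw [he]
    refine isClosed_iInter fun i => ?_
    have : {x : ℤ → A | T (x i) (x (i + 1))} =
        (fun x : ℤ → A => (x i, x (i + 1))) ⁻¹' {p : A × A | T p.1 p.2} := rfl
    rw [this]
    exact IsClosed.preimage ((continuous_apply i).prodMk (continuous_apply (i + 1)))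
      (isClosed_discrete _)
  haveI : CompactSpace {x : ℤ → A // ∀ i : ℤ, T (x i) (x (i + 1))} :=
    isCompact_iff_compactSpace.1 hclosed.isCompact
  have Hcont : Continuous Hmap := by
    refine Continuous.subtype_mk (continuous_pi fun i => ?_) _
    exact Continuous.comp continuous_of_discreteTopology
      ((continuous_apply i).comp continuous_subtype_val)
  have hφcont : Continuous φequiv := by
    refine continuous_pi fun i => ?_
    have h1 : Continuous (fun x : {x : ℤ → A // ∀ i : ℤ, T (x i) (x (i + 1))} =>
        (ψ (Hmap x) i, (g (x.1 i)).2)) := by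
      refine Continuous.prodMk ((continuous_apply i).comp (ψ.continuous.comp Hcont)) ?_
      exact (continuous_of_discreteTopology (f := fun a : A => (g a).2)).comp
        ((continuous_apply i).comp continuous_subtype_val)
    exact Continuous.comp (continuous_of_discreteTopology
      (f := fun p : Fin n × Fin τ => finProdFinEquiv p)) h1
  refine ⟨n * τ, Nat.mul_le_mul hn hτpos, Continuous.homeoOfEquivCompactToT2 (f := φequiv) hφcont, ?_⟩
  intro x
  show φto ⟨fun i => x.1 (i + 1), fun i => x.2 (i + 1)⟩ = fun i => φto x (i + 1)
  funext i
  show finProdFinEquiv (ψ (Hmap ⟨fun i => x.1 (i + 1), fun i => x.2 (i + 1)⟩) i,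
    (g (x.1 (i + 1))).2) = _
  have e : Hmap ⟨fun i => x.1 (i + 1), fun i => x.2 (i + 1)⟩ =
      ⟨fun i => (Hmap x).1 (i + 1), fun i => (Hmap x).2 (i + 1)⟩ := Subtype.ext rfl
  rw [e, hψ (Hmap x)]


universe u

set_option maxHeartbeats 1000000 in
theorem auxMain : ∀ (N : ℕ) (A : Type u) [Fintype A] [Nonempty A] [TopologicalSpace A]
    [DiscreteTopology A]
    (op : A → A → A), (∀ a b c : A, op a b = op a c → b = c) →
    (∀ a b c : A, op b a = op c a → b = c) →
    ∀ (T : A → A → Prop), (∀ a : A, ∃ b, T a b) → (∀ a : A, ∃ c, T c a) →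
    (∀ a a' b b' : A, T a b → T a' b' → T (op a a') (op b b')) →
    DenseOrb A T → (∃ a : A, T a a) → Fintype.card A ≤ N → FullConj A T := by
  intro N
  induction N with
  | zero =>
    intro A _ _ _ _ op hleft hright T hsucc hpred hcompat htrans hconst hcard
    have := Fintype.card_pos (α := A)
    omega
  | succ N IHN =>
    intro A _ _ _ _ op hleft hright T hsucc hpred hcompat htrans hconst hcard
    by_cases hSP : ∃ a a' : A, a ≠ a' ∧ (∀ c, T a c ↔ T a' c) ∧ (∀ c, T c a ↔ T c a')
    · refine caseA op hleft hright T hsucc hpred hcompat hSP htrans hconst ?_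
      intro B _ _ _ _ hlt opB h1 h2 TB h3 h4 h5 h6 h7
      exact IHN B opB h1 h2 TB h3 h4 h5 h6 h7 (by omega)
    · by_cases hS : ∃ a a' : A, a ≠ a' ∧ (∀ c, T a c ↔ T a' c)
      · have hTau1 : ∀ a a' : A, (∀ c, T a c ↔ T a' c) → (∀ c, T c a ↔ T c a') → a = a' := by
          intro a a' h1 h2
          by_contra hne
          exact hSP ⟨a, a', hne, h1, h2⟩
        refine caseB op hleft hright T hsucc hpred hcompat hTau1 hS htrans hconst ?_
        intro B _ _ _ _ hlt opB h1 h2 TB h3 h4 h5 h6 h7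
        exact IHN B opB h1 h2 TB h3 h4 h5 h6 h7 (by omega)
      · have hSinj : ∀ a a' : A, (∀ c, T a c ↔ T a' c) → a = a' := by
          intro a a' h1
          by_contra hne
          exact hS ⟨a, a', hne, h1⟩
        exact caseC op hleft hright T hsucc hpred hcompat hSinj htrans hconst

theorem statement18 {A : Type*} [Fintype A] [Nonempty A]
    [TopologicalSpace A] [DiscreteTopology A]
    (op : A → A → A)
    (hleft : ∀ a b c : A, op a b = op a c → b = c)
    (hright : ∀ a b c : A, op b a = op c a → b = c)
    (T : A → A → Prop)
    (hsucc : ∀ a : A, ∃ b, T a b)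
    (hpred : ∀ a : A, ∃ c, T c a)
    (hcompat : ∀ a a' b b' : A, T a b → T a' b' → T (op a a') (op b b'))
    (htrans : ∃ x ∈ {x : ℤ → A | ∀ i : ℤ, T (x i) (x (i + 1))},
      ∀ y ∈ {x : ℤ → A | ∀ i : ℤ, T (x i) (x (i + 1))},
        y ∈ closure {z : ℤ → A | ∃ m : ℕ,
          z = (fun w : ℤ → A => (fun i => w (i + 1) : ℤ → A))^[m] x})
    (hconst : ∃ a : A, T a a) :
    ∃ n : ℕ, 1 ≤ n ∧
      ∃ φ : {x : ℤ → A // ∀ i : ℤ, T (x i) (x (i + 1))} ≃ₜ (ℤ → Fin n),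
        ∀ x : {x : ℤ → A // ∀ i : ℤ, T (x i) (x (i + 1))},
          φ ⟨fun i => x.1 (i + 1), fun i => x.2 (i + 1)⟩ = fun i => φ x (i + 1) := by
  exact auxMain (Fintype.card A) A op hleft hright T hsucc hpred hcompat htrans hconst (le_refl _)
end
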